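/- arXiv:1810.05283 — 2 statements merged into one kernel-verified Lean document; each statement's English description precedes it below -/
import Mathlib

section
/- For all α, γ ∈ ℝ and every integer j ≥ 1, the real part of the quaternion (Q¹)ʲ · Q⁴ equals (−1)ʲ · [ T_{2(j+1)}(x) − 2·(c_γ² − 1)·U_{2j}(x) ], where Tₙ(x) and Uₙ(x) denote evaluations of the Chebyshev polynomials at x = c_γ·s_α. -/
open Quaternion Polynomial Polynomial.Chebyshev Real

/-- Quaternion representation of the atomic rotation in atom `P₁` (with `β = α`). -/
noncomputable def Q1 (α γ : ℝ) : ℍ[ℝ] :=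
  ⟨cos (α/2)^2 - cos γ * sin (α/2)^2,
   cos (α/2) * sin (α/2) * sin γ,
   -(sin (α/2)^2) * sin γ,
   sin (α/2) * cos (α/2) * (1 + cos γ)⟩

/-- Quaternion representation of the atomic rotation in atom `P₄` (with `β = α`). -/
noncomputable def Q4 (α γ : ℝ) : ℍ[ℝ] :=
  ⟨1 - 2 * cos (α/2)^2 * cos (γ/2)^2,
   -2 * sin (α/2) * cos (α/2) * sin (γ/2) * cos (γ/2),
   -2 * cos (α/2)^2 * sin (γ/2) * cos (γ/2),
   -2 * sin (α/2) * cos (α/2) * cos (γ/2)^2⟩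

/-
`Q¹` is a unit quaternion with real part `1 - 2x²`, so `(Q¹)² = (2 - 4x²) Q¹ - 1` and
`j ↦ Re((Q¹)ʲ Q⁴)` satisfies `a (j + 2) = (2 - 4x²) a (j + 1) - a j`. The right-hand side is
`(-1)ʲ f(2j)` for a solution `f` of the Chebyshev recurrence `f (n + 2) = 2x f (n + 1) - f n`;
two steps of that recurrence, together with the sign, give the same recurrence in `j`. Both
sides therefore agree once they agree at `j = 0` and `j = 1`.
-/

namespace Quaternion

variable {R : Type*} [CommRing R]

theorem mul_self_eq_coe_two_re_mul_sub_normSq (a : ℍ[R]) :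
    a * a = ↑(2 * a.re) * a - ↑(normSq a) := by
  rw [← self_add_star', ← self_mul_star, add_mul, star_comm_self, add_sub_cancel_right]

theorem re_pow_add_two_mul {q : ℍ[R]} (hq : normSq q = 1) (p : ℍ[R]) (n : ℕ) :
    (q ^ (n + 2) * p).re = 2 * q.re * (q ^ (n + 1) * p).re - (q ^ n * p).re := by
  have hpow : q ^ (n + 2) = ↑(2 * q.re) * q ^ (n + 1) - q ^ n := by
    rw [pow_succ, pow_succ, mul_assoc, mul_self_eq_coe_two_re_mul_sub_normSq, hq, coe_one,
      mul_sub, mul_one, ← mul_assoc, ← coe_commutes, mul_assoc, ← pow_succ]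
  rw [hpow, sub_mul, re_sub, mul_assoc, coe_mul_eq_smul, re_smul, smul_eq_mul]

end Quaternion

theorem eq_of_two_step_recurrence {A : Type*} [Ring A] {c : A} {a b : ℕ → A}
    (ha : ∀ n, a (n + 2) = c * a (n + 1) - a n) (hb : ∀ n, b (n + 2) = c * b (n + 1) - b n)
    (h0 : a 0 = b 0) (h1 : a 1 = b 1) : a = b := by
  funext n
  induction n using Nat.twoStepInduction with
  | zero => exact h0
  | one => exact h1
  | more n ih ih' => rw [ha, hb, ih, ih']

theorem neg_one_pow_mul_even_terms_recurrence {A : Type*} [CommRing A] {y : A} {f : ℤ → A}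
    (hf : ∀ n, f (n + 2) = 2 * y * f (n + 1) - f n) (j : ℕ) :
    (-1) ^ (j + 2) * f (2 * ↑(j + 2)) =
      (2 - 4 * y ^ 2) * ((-1) ^ (j + 1) * f (2 * ↑(j + 1))) - (-1) ^ j * f (2 * j) := by
  have h4 := hf (2 * j + 2)
  have h3 := hf (2 * j + 1)
  have h2 := hf (2 * j)
  rw [show (2 * j + 2 + 2 : ℤ) = 2 * ↑(j + 2) by push_cast; ring,
    show (2 * j + 2 + 1 : ℤ) = 2 * j + 1 + 2 by ring] at h4
  rw [show (2 * j + 1 + 1 : ℤ) = 2 * j + 2 by ring] at h3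
  rw [show (2 * j + 2 : ℤ) = 2 * ↑(j + 1) by push_cast; ring] at h2 h3 h4
  linear_combination (-1) ^ j * (h4 + 2 * y * h3 + h2)

theorem cos_eq_two_mul_cos_half_sq_sub_one (x : ℝ) : cos x = 2 * cos (x / 2) ^ 2 - 1 := by
  rw [← cos_two_mul, mul_div_cancel₀ _ two_ne_zero]

theorem normSq_Q1 (α γ : ℝ) : normSq (Q1 α γ) = 1 := by
  rw [normSq_def', Q1]
  linear_combination sin (α/2) ^ 2 * (sin (α/2) ^ 2 + cos (α/2) ^ 2) * sin_sq_add_cos_sq γ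
    + (sin (α/2) ^ 2 + cos (α/2) ^ 2 + 1) * sin_sq_add_cos_sq (α/2)

theorem re_Q1 (α γ : ℝ) : (Q1 α γ).re = 1 - 2 * (cos (γ/2) * sin (α/2)) ^ 2 := by
  rw [Q1, cos_eq_two_mul_cos_half_sq_sub_one γ]
  linear_combination sin_sq_add_cos_sq (α/2)

theorem re_Q1_mul_Q4 (α γ : ℝ) :
    (Q1 α γ * Q4 α γ).re =
      1 - 2 * cos (γ/2) ^ 2 + 8 * (sin (α/2) * cos (α/2)) ^ 2 * cos (γ/2) ^ 4 := by
  rw [re_mul, Q1, Q4, cos_eq_two_mul_cos_half_sq_sub_one γ]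
  linear_combination (1 - 2 * cos (α/2) ^ 2 * cos (γ/2) ^ 2 - 2 * cos (γ/2) ^ 2) *
    sin_sq_add_cos_sq (α/2)

theorem re_q_pow_j_mul_Q4_general (α γ : ℝ) (j : ℕ) :
    (Q1 α γ ^ j * Q4 α γ).re =
      (-1 : ℝ) ^ j *
        ((T ℝ (2 * ((j : ℤ) + 1))).eval (cos (γ/2) * sin (α/2)) -
          2 * (cos (γ/2)^2 - 1) * (U ℝ (2 * (j : ℤ))).eval (cos (γ/2) * sin (α/2))) := by
  set x := cos (γ/2) * sin (α/2)
  set f : ℤ → ℝ := fun n ↦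
    (T ℝ (n + 2)).eval x - 2 * (cos (γ/2)^2 - 1) * (U ℝ n).eval x
  have hf : ∀ n, f (n + 2) = 2 * x * f (n + 1) - f n := by
    intro n
    simp only [f, add_right_comm n 1 2, T_add_two ℝ (n + 2), U_add_two ℝ n, eval_sub, eval_mul,
      eval_ofNat, eval_X]
    ring
  have hsol := eq_of_two_step_recurrence (c := 2 - 4 * x ^ 2)
    (a := fun j : ℕ ↦ (Q1 α γ ^ j * Q4 α γ).re) (b := fun j : ℕ ↦ (-1) ^ j * f (2 * j))
    (fun n ↦ by rw [re_pow_add_two_mul (normSq_Q1 α γ), re_Q1]; ring)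
    (neg_one_pow_mul_even_terms_recurrence hf) ?_ ?_
  · rw [congrFun hsol j, mul_add_one]
  · -- the goal's `re` is elaborated at `ℍ[ℝ,-1,-1]`, on which `one_mul` does not match
    show (Q1 α γ ^ 0 * Q4 α γ).re = _
    rw [pow_zero, one_mul]
    norm_num [f, Q4, T_two, U_zero]
    linear_combination -2 * cos (γ/2) ^ 2 * sin_sq_add_cos_sq (α/2)
  · have hT4 : T ℝ 4 = (T ℝ 2).comp (T ℝ 2) := by rw [← T_mul]; norm_num
    simp only [f, pow_one, Nat.cast_one, mul_one, re_Q1_mul_Q4]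
    norm_num [hT4, T_two, U_two]
    linear_combination (8 * cos (γ/2) ^ 4 * sin (α/2) ^ 2) * sin_sq_add_cos_sq (α/2)

/-- The real part of `(Q¹)ʲ · Q⁴` in terms of Chebyshev polynomials evaluated at
`x = cos(γ/2)·sin(α/2)`. -/
theorem re_q_pow_j_mul_Q4 (α γ : ℝ) (j : ℕ) (hj : 1 ≤ j) :
    (Q1 α γ ^ j * Q4 α γ).re =
      (-1 : ℝ) ^ j *
        ((T ℝ (2 * ((j : ℤ) + 1))).eval (cos (γ/2) * sin (α/2)) -
          2 * (cos (γ/2)^2 - 1) * (U ℝ (2 * (j : ℤ))).eval (cos (γ/2) * sin (α/2))) :=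
  re_q_pow_j_mul_Q4_general α γ j
end

section
/- Define L₁ = S_xy ∘ R^y_{−γ} ∘ M̃^z_β ∘ R^y_γ ∘ S_yz and L₂ = R^y_γ ∘ S_yz ∘ R^y_γ ∘ M̃^z_α ∘ S_xy (each a single cut-and-shuffle about a reoriented horizontal axis composed with isometries). For all α, β, γ ∈ ℝ and every point p ∈ S² with strictly negative y-coordinate such that, in evaluating the composition M_{α,β,γ} ∘ L₂ ∘ L₁ at p, every application of a modular rotation produces a point with strictly negative y-coordinate (i.e., no intermediate point lies on the equator {y = 0}), one has M_{α,β,γ}( L₂( L₁(p) ) ) = p; that is, L₂ ∘ L₁ = M^{−1}_{α,β,γ} on such points. -/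
open Real

/-- Rotation of `ℝ³` by angle `θ` about the `z`-axis (coordinates `(x, y, z)`). -/
noncomputable def Rz (θ : ℝ) (p : ℝ × ℝ × ℝ) : ℝ × ℝ × ℝ :=
  (cos θ * p.1 - sin θ * p.2.1, sin θ * p.1 + cos θ * p.2.1, p.2.2)

/-- Rotation of `ℝ³` by angle `θ` about the `y`-axis (coordinates `(x, y, z)`). -/
noncomputable def Ry (θ : ℝ) (p : ℝ × ℝ × ℝ) : ℝ × ℝ × ℝ :=
  (cos θ * p.1 + sin θ * p.2.2, p.2.1, -sin θ * p.1 + cos θ * p.2.2)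

/-- The modular rotation `M̃^z_θ`: rotate by `θ` about the `z`-axis, and if the result
has strictly positive `y`-coordinate rotate by an additional `π`. -/
noncomputable def Mz (θ : ℝ) (p : ℝ × ℝ × ℝ) : ℝ × ℝ × ℝ :=
  if 0 < (Rz θ p).2.1 then Rz (θ + π) p else Rz θ p

/-- The hemispherical-shell piecewise isometry
`M_{α,β,γ} = R^y_γ ∘ M̃^z_β ∘ R^y_{−γ} ∘ M̃^z_α`. -/
noncomputable def Mpwi (α β γ : ℝ) (p : ℝ × ℝ × ℝ) : ℝ × ℝ × ℝ :=
  Ry γ (Mz β (Ry (-γ) (Mz α p)))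

/-- Reflection across the `yz`-plane, `(x,y,z) ↦ (−x,y,z)`. -/
def Syz (p : ℝ × ℝ × ℝ) : ℝ × ℝ × ℝ := (-p.1, p.2.1, p.2.2)

/-- Reflection across the `xy`-plane, `(x,y,z) ↦ (x,y,−z)`. -/
def Sxy (p : ℝ × ℝ × ℝ) : ℝ × ℝ × ℝ := (p.1, p.2.1, -p.2.2)

/-- The single cut-and-shuffle `L₁ = S_xy ∘ R^y_{−γ} ∘ M̃^z_β ∘ R^y_γ ∘ S_yz`. -/
noncomputable def L1 (β γ : ℝ) (p : ℝ × ℝ × ℝ) : ℝ × ℝ × ℝ :=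
  Sxy (Ry (-γ) (Mz β (Ry γ (Syz p))))

/-- The single cut-and-shuffle `L₂ = R^y_γ ∘ S_yz ∘ R^y_γ ∘ M̃^z_α ∘ S_xy`. -/
noncomputable def L2 (α γ : ℝ) (p : ℝ × ℝ × ℝ) : ℝ × ℝ × ℝ :=
  Ry γ (Syz (Ry γ (Mz α (Sxy p))))

lemma myRz_Rz (a b : ℝ) (q : ℝ × ℝ × ℝ) : Rz a (Rz b q) = Rz (a + b) q := by
  simp only [Rz, Prod.mk.injEq, cos_add, sin_add]
  refine ⟨by ring, by ring, by trivial⟩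

lemma myRz_zero (q : ℝ × ℝ × ℝ) : Rz 0 q = q := by
  simp [Rz]

lemma myRz_two_pi (q : ℝ × ℝ × ℝ) : Rz (2 * π) q = q := by
  simp [Rz, Real.cos_two_pi, Real.sin_two_pi]

lemma myRz_y_pi (θ : ℝ) (q : ℝ × ℝ × ℝ) : (Rz (θ + π) q).2.1 = -(Rz θ q).2.1 := by
  simp [Rz, cos_add, sin_add]; ring

/-- Key inverse lemma: on points with negative `y`, `Mz (-θ)` undoes `Mz θ`. -/
lemma myMz_inv (θ : ℝ) (q : ℝ × ℝ × ℝ) (h : q.2.1 < 0) : Mz (-θ) (Mz θ q) = q := by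
  by_cases c : 0 < (Rz θ q).2.1
  · have e1 : Mz θ q = Rz (θ + π) q := by simp [Mz, c]
    have hy : 0 < (Rz (-θ) (Rz (θ + π) q)).2.1 := by
      rw [myRz_Rz]
      have : -θ + (θ + π) = 0 + π := by ring
      rw [this, myRz_y_pi, myRz_zero]
      linarith
    rw [e1, Mz, if_pos hy, myRz_Rz]
    have : -θ + π + (θ + π) = 2 * π := by ring
    rw [this, myRz_two_pi]
  · have e1 : Mz θ q = Rz θ q := by simp [Mz, c]
    have hy : ¬ 0 < (Rz (-θ) (Rz θ q)).2.1 := by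
      rw [myRz_Rz]
      have : -θ + θ = 0 := by ring
      rw [this, myRz_zero]
      linarith
    rw [e1, Mz, if_neg hy, myRz_Rz]
    have : -θ + θ = 0 := by ring
    rw [this, myRz_zero]

lemma mySyz_Ry (γ : ℝ) (q : ℝ × ℝ × ℝ) : Syz (Ry γ q) = Ry (-γ) (Syz q) := by
  simp only [Syz, Ry, Prod.mk.injEq, cos_neg, sin_neg]
  refine ⟨by ring, by trivial, by ring⟩

lemma mySyz_Rz (θ : ℝ) (q : ℝ × ℝ × ℝ) : Syz (Rz θ q) = Rz (-θ) (Syz q) := by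
  simp only [Syz, Rz, Prod.mk.injEq, cos_neg, sin_neg]
  refine ⟨by ring, by ring, by trivial⟩

lemma mySyz_Mz (θ : ℝ) (q : ℝ × ℝ × ℝ) : Syz (Mz θ q) = Mz (-θ) (Syz q) := by
  have hc : (Rz (-θ) (Syz q)).2.1 = (Rz θ q).2.1 := by
    simp [Rz, Syz, cos_neg, sin_neg]
  by_cases c : 0 < (Rz θ q).2.1
  · rw [Mz, if_pos c, Mz, if_pos (hc ▸ c), mySyz_Rz]
    have : -(θ + π) = -θ + π + (-(2*π)) := by ring
    rw [this, ← myRz_Rz]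
    congr 1
    have : (-(2*π) : ℝ) = -(2*π) + 0 := by ring
    simp [Rz, Real.cos_two_pi, Real.sin_two_pi, cos_neg, sin_neg]
  · rw [Mz, if_neg c, Mz, if_neg (by rw [hc]; exact c), mySyz_Rz]

lemma mySxy_Rz (θ : ℝ) (q : ℝ × ℝ × ℝ) : Sxy (Rz θ q) = Rz θ (Sxy q) := rfl

lemma mySxy_Mz (θ : ℝ) (q : ℝ × ℝ × ℝ) : Sxy (Mz θ q) = Mz θ (Sxy q) := by
  have hc : (Rz θ (Sxy q)).2.1 = (Rz θ q).2.1 := rfl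
  by_cases c : 0 < (Rz θ q).2.1
  · rw [Mz, if_pos c, Mz, if_pos (hc ▸ c), mySxy_Rz]
  · rw [Mz, if_neg c, Mz, if_neg (hc ▸ c), mySxy_Rz]

lemma mySxy_Sxy (q : ℝ × ℝ × ℝ) : Sxy (Sxy q) = q := by simp [Sxy]

lemma mySyz_Syz (q : ℝ × ℝ × ℝ) : Syz (Syz q) = q := by simp [Syz]

lemma myRy_Ry (a b : ℝ) (q : ℝ × ℝ × ℝ) : Ry a (Ry b q) = Ry (a + b) q := by
  simp only [Ry, Prod.mk.injEq, cos_add, sin_add]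
  refine ⟨by ring, by trivial, by ring⟩

lemma myRy_zero (q : ℝ × ℝ × ℝ) : Ry 0 q = q := by simp [Ry]

lemma myRy_Syz_Ry (γ : ℝ) (q : ℝ × ℝ × ℝ) : Ry γ (Syz (Ry γ q)) = Syz q := by
  rw [mySyz_Ry, myRy_Ry]
  simp [myRy_zero]

lemma myMz_y_neg (θ : ℝ) (q : ℝ × ℝ × ℝ) : Mz (-θ) (Syz q) = Syz (Mz θ q) :=
  (mySyz_Mz θ q).symm

lemma myMz_Syz (θ : ℝ) (q : ℝ × ℝ × ℝ) : Mz θ (Syz q) = Syz (Mz (-θ) q) := by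
  have := mySyz_Mz (-θ) q
  rw [neg_neg] at this
  exact this.symm

/-- Normal form for `L2 ∘ L1`. -/
lemma myL2L1 (α β γ : ℝ) (p : ℝ × ℝ × ℝ) :
    L2 α γ (L1 β γ p) = Mz (-α) (Ry γ (Mz (-β) (Ry (-γ) p))) := by
  rw [L2, L1, mySxy_Sxy, myRy_Syz_Ry, mySyz_Mz, mySyz_Ry, mySyz_Mz,
    mySyz_Ry, mySyz_Syz, neg_neg]

/-- `L₂ ∘ L₁ = M^{−1}_{α,β,γ}`, i.e. `M_{α,β,γ} ∘ L₂ ∘ L₁ = id`, on points of the open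
lower hemisphere whose evaluation never places the output of a modular rotation on or
above the equator. -/
theorem pwi_inverse_factorization (α β γ : ℝ) (p : ℝ × ℝ × ℝ)
    (hp : p.1^2 + p.2.1^2 + p.2.2^2 = 1) (hy : p.2.1 < 0)
    (h1 : (Mz β (Ry γ (Syz p))).2.1 < 0)
    (h2 : (Mz α (Sxy (L1 β γ p))).2.1 < 0)
    (h3 : (Mz α (L2 α γ (L1 β γ p))).2.1 < 0)
    (h4 : (Mz β (Ry (-γ) (Mz α (L2 α γ (L1 β γ p))))).2.1 < 0) :
    Mpwi α β γ (L2 α γ (L1 β γ p)) = p := by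
  -- translate h1 into the sign fact we need
  have hkey : (Mz (-β) (Ry (-γ) p)).2.1 < 0 := by
    have e : Ry γ (Syz p) = Syz (Ry (-γ) p) := by
      rw [mySyz_Ry, neg_neg]
    rw [e, myMz_Syz] at h1
    exact h1
  have hq : (Ry γ (Mz (-β) (Ry (-γ) p))).2.1 < 0 := hkey
  rw [Mpwi, myL2L1]
  have e1 : Mz α (Mz (-α) (Ry γ (Mz (-β) (Ry (-γ) p))))
      = Ry γ (Mz (-β) (Ry (-γ) p)) := by
    have := myMz_inv (-α) (Ry γ (Mz (-β) (Ry (-γ) p))) hq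
    rwa [neg_neg] at this
  rw [e1, myRy_Ry]
  have : (-γ + γ : ℝ) = 0 := by ring
  rw [this, myRy_zero]
  have e2 : Mz β (Mz (-β) (Ry (-γ) p)) = Ry (-γ) p := by
    have := myMz_inv (-β) (Ry (-γ) p) (by exact hy)
    rwa [neg_neg] at this
  rw [e2, myRy_Ry]
  have : (γ + -γ : ℝ) = 0 := by ring
  rw [this, myRy_zero]
end
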